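/- If H is a forest of order n ≥ 4 having at least two connected components, then PS(H) ≤ 2·F(n-1), with equality if and only if H is the disjoint union P_2 ⊔ P_{n-2}. -/

import Mathlib

open SimpleGraph Finset
open scoped Classical

noncomputable section

namespace PermSum

variable {V W : Type*}

/-- Number of cycle components of the spanning subgraph with edge set `M`:
components all of whose vertices have degree `2`. -/
noncomputable def numCycles [Fintype V] (M : Finset (Sym2 V)) : ℕ :=
  Nat.card {c : (fromEdgeSet (↑M : Set (Sym2 V))).ConnectedComponent //
    ∀ v, (fromEdgeSet (↑M : Set (Sym2 V))).connectedComponentMk v = c →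
      (fromEdgeSet (↑M : Set (Sym2 V))).degree v = 2}

/-- `M` is the edge set of a Sachs subgraph of `G`: each component of the graph it spans is a
single edge or a cycle (every covered vertex has degree 1 or 2, and any vertex of degree 1 has
its neighbours of degree 1). -/
def IsSachs [Fintype V] (G : SimpleGraph V) (M : Finset (Sym2 V)) : Prop :=
  (↑M : Set (Sym2 V)) ⊆ G.edgeSet ∧
  (∀ v ∈ (fromEdgeSet (↑M : Set (Sym2 V))).support,
      (fromEdgeSet (↑M : Set (Sym2 V))).degree v = 1 ∨
      (fromEdgeSet (↑M : Set (Sym2 V))).degree v = 2) ∧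
  (∀ v w, (fromEdgeSet (↑M : Set (Sym2 V))).Adj v w →
      (fromEdgeSet (↑M : Set (Sym2 V))).degree v = 1 →
      (fromEdgeSet (↑M : Set (Sym2 V))).degree w = 1)

/-- The permanental sum of a finite simple graph: `∑_H 2^{c(H)}` over all Sachs subgraphs `H`
(including the empty one). -/
noncomputable def PS [Fintype V] (G : SimpleGraph V) : ℕ :=
  ∑ M ∈ Finset.univ.filter (fun M : Finset (Sym2 V) => IsSachs G M), 2 ^ numCycles M




lemma path_unique_edge_at_end {G : SimpleGraph V} {w u : V} (q : G.Walk w u) (hq : q.IsPath) :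
    ∀ x y, s(w, x) ∈ q.edges → s(w, y) ∈ q.edges → x = y := by
  cases q with
  | nil => simp
  | @cons _ b _ h q =>
    intro x y hx hy
    rw [Walk.edges_cons, List.mem_cons] at hx hy
    have hw : w ∉ q.support := ((Walk.cons_isPath_iff _ _).mp hq).2
    have hxb : ∀ z, s(w, z) = s(w, b) ∨ s(w, z) ∈ q.edges → z = b := by
      intro z hz
      rcases hz with hz | hz
      · rcases Sym2.eq_iff.mp hz with ⟨-, rfl⟩ | ⟨rfl, rfl⟩
        · rfl
        · exact absurd h (G.irrefl)
      · exact absurd (Walk.fst_mem_support_of_mem_edges q hz) hw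
    rw [hxb x hx, hxb y hy]

lemma exists_degree_le_one [Fintype V] {G : SimpleGraph V} (hG : G.IsAcyclic) (v₀ : V) :
    ∃ w, G.Reachable v₀ w ∧ G.degree w ≤ 1 := by
  classical
  set L : Set ℕ := {ℓ | ∃ (w : V) (p : G.Walk v₀ w), p.IsPath ∧ p.length = ℓ} with hL
  have hne : L.Nonempty := ⟨0, v₀, Walk.nil, by simp, rfl⟩
  have hbdd : BddAbove L := by
    refine ⟨Fintype.card V, fun ℓ hℓ => ?_⟩
    obtain ⟨w, p, hp, rfl⟩ := hℓ
    exact hp.length_lt.le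
  obtain ⟨w, p, hp, hlen⟩ := Nat.sSup_mem hne hbdd
  refine ⟨w, p.reachable, ?_⟩
  by_contra hdeg
  have h2 : 1 < (G.neighborFinset w).card := by
    rw [not_le] at hdeg; exact hdeg
  obtain ⟨x₁, hx₁, x₂, hx₂, hne'⟩ := Finset.one_lt_card.mp h2
  rw [mem_neighborFinset] at hx₁ hx₂
  -- pick a neighbor x with s(w,x) ∉ p.edges
  have hrev : p.reverse.IsPath := p.isPath_reverse_iff.mpr hp
  have hmem : ∀ z, s(w, z) ∈ p.reverse.edges ↔ s(w, z) ∈ p.edges := by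
    intro z; rw [Walk.edges_reverse, List.mem_reverse]
  obtain ⟨x, hA, hE⟩ : ∃ x, G.Adj w x ∧ s(w, x) ∉ p.edges := by
    by_cases h1 : s(w, x₁) ∈ p.edges
    · by_cases h2' : s(w, x₂) ∈ p.edges
      · exact absurd (path_unique_edge_at_end p.reverse hrev x₁ x₂
          ((hmem x₁).mpr h1) ((hmem x₂).mpr h2')) hne'
      · exact ⟨x₂, hx₂, h2'⟩
    · exact ⟨x₁, hx₁, h1⟩
  by_cases hxs : x ∈ p.support
  · have hq := hp.dropUntil hxs
    have hcyc : (Walk.cons hA (p.dropUntil x hxs)).IsCycle :=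
      (Walk.cons_isCycle_iff _ hA).mpr
        ⟨hq, fun hc => hE (Walk.edges_dropUntil_subset _ hxs hc)⟩
    exact hG _ hcyc
  · have hp' : (Walk.cons hA.symm p.reverse).IsPath := (Walk.cons_isPath_iff _ _).mpr
      ⟨hrev, by rwa [Walk.support_reverse, List.mem_reverse]⟩
    have hp'' : (Walk.cons hA.symm p.reverse).reverse.IsPath :=
      (Walk.isPath_reverse_iff _).mpr hp'
    have hmem' : p.length + 1 ∈ L := by
      refine ⟨x, (Walk.cons hA.symm p.reverse).reverse, hp'', ?_⟩
      simp [Walk.length_reverse, Walk.length_cons]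
    have := le_csSup hbdd hmem'
    omega

lemma exists_leaf [Fintype V] {G : SimpleGraph V} (hG : G.IsAcyclic) {x y : V}
    (hxy : G.Adj x y) : ∃ w u, G.neighborFinset w = {u} := by
  obtain ⟨w, hr, hd⟩ := exists_degree_le_one hG x
  have h1 : 1 ≤ G.degree w := by
    obtain ⟨p⟩ := hr
    by_cases hwx : w = x
    · subst hwx
      have : y ∈ G.neighborFinset w := (mem_neighborFinset _ _ _).mpr hxy
      exact Finset.card_pos.mpr ⟨y, this⟩
    · have hnn : ¬p.reverse.Nil := Walk.not_nil_of_ne hwx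
      have : G.Adj w (p.reverse.getVert 1) := Walk.adj_snd hnn
      exact Finset.card_pos.mpr ⟨_, (mem_neighborFinset _ _ _).mpr this⟩
  have hdeg : G.degree w = 1 := le_antisymm hd h1
  obtain ⟨u, hu⟩ := Finset.card_eq_one.mp hdeg
  exact ⟨w, u, hu⟩



/-- `M` is (the edge set of) a matching in `G`. -/
def IsMch (G : SimpleGraph V) (M : Finset (Sym2 V)) : Prop :=
  (↑M : Set (Sym2 V)) ⊆ G.edgeSet ∧ ∀ e ∈ M, ∀ f ∈ M, e ≠ f → ∀ v, v ∈ e → v ∉ f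

/-- Matchings of `G` all of whose edges have vertices inside `A`. -/
def mchIn [Fintype V] (G : SimpleGraph V) (A : Set V) : Finset (Finset (Sym2 V)) :=
  Finset.univ.filter (fun M => IsMch G M ∧ ∀ e ∈ M, ∀ v ∈ e, v ∈ A)

def mIn [Fintype V] (G : SimpleGraph V) (A : Set V) : ℕ := (mchIn G A).card

def mm [Fintype V] (G : SimpleGraph V) : ℕ := mIn G Set.univ

lemma mm_irrel {V : Type*} (i1 i2 : Fintype V) (G : SimpleGraph V) :
    @mm V i1 G = @mm V i2 G := by
  rw [Subsingleton.elim i1 i2]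

lemma mIn_irrel {V : Type*} (i1 i2 : Fintype V) (G : SimpleGraph V) (A : Set V) :
    @mIn V i1 G A = @mIn V i2 G A := by
  rw [Subsingleton.elim i1 i2]

lemma empty_mem_mchIn [Fintype V] (G : SimpleGraph V) (A : Set V) : ∅ ∈ mchIn G A := by
  simp only [mchIn, Finset.mem_filter, Finset.mem_univ, true_and]
  exact ⟨⟨by simp, by simp⟩, by simp⟩

lemma mIn_pos [Fintype V] (G : SimpleGraph V) (A : Set V) : 1 ≤ mIn G A :=
  Finset.card_pos.mpr ⟨∅, empty_mem_mchIn G A⟩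

lemma IsMch.subset {G : SimpleGraph V} {M N : Finset (Sym2 V)} (hM : IsMch G M)
    (hNM : N ⊆ M) : IsMch G N :=
  ⟨fun e he => hM.1 (hNM he), fun e he f hf => hM.2 e (hNM he) f (hNM hf)⟩

lemma mm_eq_one_of_no_adj [Fintype V] {G : SimpleGraph V} (h : ∀ a b, ¬ G.Adj a b) :
    mm G = 1 := by
  have : mchIn G Set.univ = {∅} := by
    ext M
    simp only [mchIn, Finset.mem_filter, Finset.mem_univ, true_and, Finset.mem_singleton]
    constructor
    · rintro ⟨⟨hsub, -⟩, -⟩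
      by_contra hM
      obtain ⟨e, he⟩ := Finset.nonempty_iff_ne_empty.mpr hM
      have := hsub he
      induction e with
      | h x y => exact h x y ((mem_edgeSet G).mp this)
    · rintro rfl
      exact ⟨⟨by simp, by simp⟩, by simp⟩
  rw [mm, mIn, this, Finset.card_singleton]

lemma mem_map_of_mem {f : V → W} {v : V} {e : Sym2 V} (hv : v ∈ e) : f v ∈ Sym2.map f e :=
  Sym2.mem_map.mpr ⟨v, hv, rfl⟩

lemma edge_iff_map_edge {f : V → W} {G : SimpleGraph V} {G' : SimpleGraph W}
    (hadj : ∀ a b, G.Adj a b ↔ G'.Adj (f a) (f b)) (e : Sym2 V) :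
    e ∈ G.edgeSet ↔ Sym2.map f e ∈ G'.edgeSet := by
  induction e with
  | h a b => rw [Sym2.map_pair_eq, mem_edgeSet, mem_edgeSet]; exact hadj a b

/-- Transfer lemma: matchings inside `f '' B` of `G'` biject with matchings of `G` inside `B`,
when `f` is an induced-subgraph embedding. -/
lemma mIn_image [Fintype V] [Fintype W] {f : V → W} (hf : Function.Injective f)
    {G : SimpleGraph V} {G' : SimpleGraph W}
    (hadj : ∀ a b, G.Adj a b ↔ G'.Adj (f a) (f b)) (B : Set V) :
    mIn G' (f '' B) = mIn G B := by
  refine (Finset.card_bij (fun M _ => M.image (Sym2.map f)) ?_ ?_ ?_).symm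
  · -- maps into target
    intro M hM
    simp only [mchIn, Finset.mem_filter, Finset.mem_univ, true_and] at hM ⊢
    obtain ⟨⟨hsub, hdisj⟩, hB⟩ := hM
    refine ⟨⟨?_, ?_⟩, ?_⟩
    · intro e' he'
      obtain ⟨e, he, rfl⟩ := Finset.mem_image.mp he'
      exact (edge_iff_map_edge hadj e).mp (hsub he)
    · intro e' he' f' hf' hne v' hv' hv''
      obtain ⟨e, he, rfl⟩ := Finset.mem_image.mp he'
      obtain ⟨f₀, hf₀, rfl⟩ := Finset.mem_image.mp hf'
      obtain ⟨a, ha, rfl⟩ := Sym2.mem_map.mp hv'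
      obtain ⟨b, hb, hab⟩ := Sym2.mem_map.mp hv''
      have hba : b = a := hf hab
      subst hba
      exact hdisj e he f₀ hf₀ (fun hh => hne (by rw [hh])) b ha hb
    · intro e' he' v' hv'
      obtain ⟨e, he, rfl⟩ := Finset.mem_image.mp he'
      obtain ⟨a, ha, rfl⟩ := Sym2.mem_map.mp hv'
      exact ⟨a, hB e he a ha, rfl⟩
  · -- injective
    intro M₁ h₁ M₂ h₂ h
    exact Finset.image_injective (Sym2.map.injective hf) h
  · -- surjective
    intro M' hM'
    simp only [mchIn, Finset.mem_filter, Finset.mem_univ, true_and] at hM'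
    obtain ⟨⟨hsub, hdisj⟩, hB⟩ := hM'
    have hpre : ∀ e' ∈ M', ∃ e₀ : Sym2 V, Sym2.map f e₀ = e' ∧ ∀ v ∈ e₀, v ∈ B := by
      intro e' he'
      induction e' with
      | h w₁ w₂ =>
        obtain ⟨a, haB, ha⟩ := hB _ he' w₁ (Sym2.mem_mk_left _ _)
        obtain ⟨b, hbB, hb⟩ := hB _ he' w₂ (Sym2.mem_mk_right _ _)
        refine ⟨s(a, b), by rw [Sym2.map_pair_eq, ha, hb], ?_⟩
        intro v hv
        rcases Sym2.mem_iff.mp hv with rfl | rfl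
        · exact haB
        · exact hbB
    choose g hg1 hg2 using hpre
    refine ⟨M'.attach.image (fun e => g e.1 e.2), ?_, ?_⟩
    · simp only [mchIn, Finset.mem_filter, Finset.mem_univ, true_and]
      have hmem : ∀ {e₀}, e₀ ∈ M'.attach.image (fun e => g e.1 e.2) →
          Sym2.map f e₀ ∈ M' ∧ ∀ v ∈ e₀, v ∈ B := by
        intro e₀ he₀
        obtain ⟨e, -, rfl⟩ := Finset.mem_image.mp he₀
        exact ⟨by rw [hg1 e.1 e.2]; exact e.2, hg2 e.1 e.2⟩
      refine ⟨⟨?_, ?_⟩, fun e he v hv => (hmem he).2 v hv⟩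
      · intro e he
        exact (edge_iff_map_edge hadj e).mpr (hsub (hmem he).1)
      · intro e he f₀ hf₀ hne v hv hv'
        have h1 := (hmem he).1
        have h2 := (hmem hf₀).1
        have hne' : Sym2.map f e ≠ Sym2.map f f₀ := fun hh =>
          hne (Sym2.map.injective hf hh)
        exact hdisj _ h1 _ h2 hne' (f v) (mem_map_of_mem hv) (mem_map_of_mem hv')
    · show (M'.attach.image (fun e => g e.1 e.2)).image (Sym2.map f) = M'
      rw [Finset.image_image]
      have : ∀ e ∈ M'.attach, (Sym2.map f ∘ fun e => g e.1 e.2) e = e.1 := by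
        intro e _
        exact hg1 e.1 e.2
      rw [Finset.image_congr (fun e he => this e he)]
      exact Finset.attach_image_val

lemma mm_iso [Fintype V] [Fintype W] {G : SimpleGraph V} {G' : SimpleGraph W}
    (e : G ≃g G') : mm G = mm G' := by
  have := mIn_image e.toEquiv.injective (f := e.toEquiv) (G := G) (G' := G')
    (fun a b => (e.map_adj_iff).symm) Set.univ
  rw [Set.image_univ, Equiv.range_eq_univ] at this
  rw [mm, mm, ← this]

lemma mIn_induce [Fintype V] (G : SimpleGraph V) (s : Set V) [Fintype ↥s] :
    mm (G.induce s) = mIn G s := by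
  have := mIn_image (Subtype.val_injective (p := fun x => x ∈ s))
    (G := G.induce s) (G' := G) (fun a b => Iff.rfl) Set.univ
  rw [Set.image_univ, Subtype.range_coe] at this
  rw [mm, ← this]

lemma IsMch.subset' {G : SimpleGraph V} {M N : Finset (Sym2 V)} (hM : IsMch G M)
    (hNM : N ⊆ M) : IsMch G N :=
  ⟨fun e he => hM.1 (hNM he), fun e he f hf => hM.2 e (hNM he) f (hNM hf)⟩

lemma exists_eq_of_mem_edge {G : SimpleGraph V} {e : Sym2 V} {v : V}
    (he : e ∈ G.edgeSet) (hv : v ∈ e) : ∃ w, G.Adj v w ∧ e = s(v, w) := by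
  induction e with
  | h x y =>
    rcases Sym2.mem_iff.mp hv with rfl | rfl
    · exact ⟨y, (mem_edgeSet G).mp he, rfl⟩
    · exact ⟨x, ((mem_edgeSet G).mp he).symm, Sym2.eq_swap⟩

lemma edge_dichotomy {G : SimpleGraph V} {A : Set V}
    (hA : ∀ a b, G.Adj a b → (a ∈ A ↔ b ∈ A)) {e : Sym2 V} (he : e ∈ G.edgeSet) :
    (∀ v ∈ e, v ∈ A) ∨ (∀ v ∈ e, v ∈ Aᶜ) := by
  induction e with
  | h x y =>
    have hxy : G.Adj x y := (mem_edgeSet G).mp he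
    by_cases hx : x ∈ A
    · left
      intro v hv
      rcases Sym2.mem_iff.mp hv with rfl | rfl
      · exact hx
      · exact (hA _ _ hxy).mp hx
    · right
      intro v hv
      rcases Sym2.mem_iff.mp hv with rfl | rfl
      · exact hx
      · exact fun hy => hx ((hA _ _ hxy).mpr hy)

lemma mm_split [Fintype V] {G : SimpleGraph V} {A : Set V}
    (hA : ∀ a b, G.Adj a b → (a ∈ A ↔ b ∈ A)) :
    mm G = mIn G A * mIn G Aᶜ := by
  rw [mm, mIn, mIn, mIn, ← Finset.card_product]
  refine (Finset.card_bij (fun p _ => p.1 ∪ p.2) ?_ ?_ ?_).symm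
  · rintro ⟨M₁, M₂⟩ hp
    simp only [Finset.mem_product, mchIn, Finset.mem_filter, Finset.mem_univ, true_and] at hp ⊢
    obtain ⟨⟨h₁, hA₁⟩, ⟨h₂, hA₂⟩⟩ := hp
    refine ⟨⟨?_, ?_⟩, fun _ _ _ _ => Set.mem_univ _⟩
    · intro e he
      rcases Finset.mem_union.mp he with he | he
      · exact h₁.1 he
      · exact h₂.1 he
    · intro e he f hf hne x hxe hxf
      rcases Finset.mem_union.mp he with he | he <;>
        rcases Finset.mem_union.mp hf with hf | hf
      · exact h₁.2 e he f hf hne x hxe hxf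
      · exact (hA₂ f hf x hxf) (hA₁ e he x hxe)
      · exact (hA₂ e he x hxe) (hA₁ f hf x hxf)
      · exact h₂.2 e he f hf hne x hxe hxf
  · rintro ⟨M₁, M₂⟩ hp ⟨N₁, N₂⟩ hq h
    simp only [Finset.mem_product, mchIn, Finset.mem_filter, Finset.mem_univ, true_and]
      at hp hq
    obtain ⟨⟨h₁, hA₁⟩, ⟨h₂, hA₂⟩⟩ := hp
    obtain ⟨⟨g₁, gA₁⟩, ⟨g₂, gA₂⟩⟩ := hq
    simp only at h
    have key : ∀ (P₁ P₂ : Finset (Sym2 V)), (∀ e ∈ P₁, ∀ v ∈ e, v ∈ A) →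
        (∀ e ∈ P₂, ∀ v ∈ e, v ∈ Aᶜ) → P₁ = (P₁ ∪ P₂).filter (fun e => ∀ v ∈ e, v ∈ A) := by
      intro P₁ P₂ hP₁ hP₂
      ext e
      simp only [Finset.mem_filter, Finset.mem_union]
      constructor
      · intro he
        exact ⟨Or.inl he, hP₁ e he⟩
      · rintro ⟨he | he, hv⟩
        · exact he
        · exfalso
          induction e with
          | h x y => exact hP₂ _ he x (Sym2.mem_mk_left _ _) (hv x (Sym2.mem_mk_left _ _))
    have key2 : ∀ (P₁ P₂ : Finset (Sym2 V)), (∀ e ∈ P₁, ∀ v ∈ e, v ∈ A) →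
        (∀ e ∈ P₂, ∀ v ∈ e, v ∈ Aᶜ) →
        P₂ = (P₁ ∪ P₂).filter (fun e => ¬ ∀ v ∈ e, v ∈ A) := by
      intro P₁ P₂ hP₁ hP₂
      ext e
      simp only [Finset.mem_filter, Finset.mem_union]
      constructor
      · intro he
        refine ⟨Or.inr he, fun hv => ?_⟩
        induction e with
        | h x y => exact hP₂ _ he x (Sym2.mem_mk_left _ _) (hv x (Sym2.mem_mk_left _ _))
      · rintro ⟨he | he, hv⟩
        · exact absurd (hP₁ e he) hv
        · exact he
    have e1 : M₁ = N₁ := by rw [key M₁ M₂ hA₁ hA₂, key N₁ N₂ gA₁ gA₂, h]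
    have e2 : M₂ = N₂ := by rw [key2 M₁ M₂ hA₁ hA₂, key2 N₁ N₂ gA₁ gA₂, h]
    rw [Prod.ext_iff]
    exact ⟨e1, e2⟩
  · intro M hM
    simp only [mchIn, Finset.mem_filter, Finset.mem_univ, true_and] at hM
    obtain ⟨hmch, -⟩ := hM
    refine ⟨(M.filter (fun e => ∀ v ∈ e, v ∈ A), M.filter (fun e => ¬ ∀ v ∈ e, v ∈ A)),
      ?_, ?_⟩
    · simp only [Finset.mem_product, mchIn, Finset.mem_filter, Finset.mem_univ, true_and]
      refine ⟨⟨hmch.subset' (Finset.filter_subset _ _), ?_⟩,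
        ⟨hmch.subset' (Finset.filter_subset _ _), ?_⟩⟩
      · intro e he
        exact he.2
      · intro e he v hv
        obtain ⟨heM, hne⟩ := he
        rcases edge_dichotomy hA (hmch.1 heM) with h | h
        · exact absurd h hne
        · exact h v hv
    · exact Finset.filter_union_filter_not_eq _ M

lemma mm_leaf_rec [Fintype V] {G : SimpleGraph V} {v u : V}
    (h : G.neighborFinset v = {u}) :
    mm G = mIn G ({v}ᶜ) + mIn G (({v, u} : Set V)ᶜ) := by
  have hvu : G.Adj v u := by
    rw [← mem_neighborFinset, h]
    exact Finset.mem_singleton_self u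
  have edge_at_v : ∀ {M : Finset (Sym2 V)}, IsMch G M → ∀ e ∈ M, v ∈ e → e = s(v, u) := by
    intro M hM e he hv
    obtain ⟨w, hw, rfl⟩ := exists_eq_of_mem_edge (hM.1 he) hv
    have : w ∈ G.neighborFinset v := (mem_neighborFinset _ _ _).mpr hw
    rw [h, Finset.mem_singleton] at this
    rw [this]
  have h1 : (mchIn G Set.univ).filter (fun M => s(v, u) ∉ M) = mchIn G ({v}ᶜ) := by
    ext M
    simp only [mchIn, Finset.mem_filter, Finset.mem_univ, true_and]
    constructor
    · rintro ⟨⟨hmch, -⟩, hnotin⟩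
      refine ⟨hmch, fun e he x hx => ?_⟩
      simp only [Set.mem_compl_iff, Set.mem_singleton_iff]
      rintro rfl
      exact hnotin (edge_at_v hmch e he hx ▸ he)
    · rintro ⟨hmch, havoid⟩
      refine ⟨⟨hmch, fun _ _ _ _ => Set.mem_univ _⟩, fun hin => ?_⟩
      exact havoid _ hin v (Sym2.mem_mk_left _ _) rfl
  have h2 : ((mchIn G Set.univ).filter (fun M => ¬ s(v, u) ∉ M)).card
      = mIn G (({v, u} : Set V)ᶜ) := by
    rw [mIn]
    refine (Finset.card_bij (fun M _ => insert s(v, u) M) ?_ ?_ ?_).symm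
    · intro M hM
      simp only [mchIn, Finset.mem_filter, Finset.mem_univ, true_and, not_not] at hM ⊢
      obtain ⟨hmch, hav⟩ := hM
      have hnot : ∀ e ∈ M, ∀ x ∈ e, x ≠ v ∧ x ≠ u := by
        intro e he x hx
        have := hav e he x hx
        simp only [Set.mem_compl_iff, Set.mem_insert_iff, Set.mem_singleton_iff, not_or]
          at this
        exact this
      refine ⟨⟨⟨?_, ?_⟩, fun _ _ _ _ => Set.mem_univ _⟩, Finset.mem_insert_self _ _⟩
      · intro e he
        rcases Finset.mem_insert.mp he with rfl | he
        · exact hvu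
        · exact hmch.1 he
      · intro e he f hf hne x hxe hxf
        rcases Finset.mem_insert.mp he with rfl | he <;>
          rcases Finset.mem_insert.mp hf with rfl | hf
        · exact (hne rfl).elim
        · rcases Sym2.mem_iff.mp hxe with h' | h'
          · exact (hnot f hf x hxf).1 h'
          · exact (hnot f hf x hxf).2 h'
        · rcases Sym2.mem_iff.mp hxf with h' | h'
          · exact (hnot e he x hxe).1 h'
          · exact (hnot e he x hxe).2 h'
        · exact hmch.2 e he f hf hne x hxe hxf
    · intro M₁ h₁ M₂ h₂ hins
      simp only [mchIn, Finset.mem_filter, Finset.mem_univ, true_and] at h₁ h₂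
      have hn₁ : s(v, u) ∉ M₁ := fun hin => by
        have := h₁.2 _ hin v (Sym2.mem_mk_left _ _)
        simp at this
      have hn₂ : s(v, u) ∉ M₂ := fun hin => by
        have := h₂.2 _ hin v (Sym2.mem_mk_left _ _)
        simp at this
      have := congrArg (Finset.erase · s(v, u)) hins
      simpa [Finset.erase_insert hn₁, Finset.erase_insert hn₂] using this
    · intro M hM
      simp only [Finset.mem_filter, mchIn, Finset.mem_univ, true_and, not_not] at hM
      obtain ⟨⟨hmch, -⟩, hin⟩ := hM
      refine ⟨M.erase s(v, u), ?_, Finset.insert_erase hin⟩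
      simp only [mchIn, Finset.mem_filter, Finset.mem_univ, true_and]
      refine ⟨hmch.subset' (Finset.erase_subset _ _), ?_⟩
      intro e he x hx
      obtain ⟨hne, heM⟩ := Finset.mem_erase.mp he
      simp only [Set.mem_compl_iff, Set.mem_insert_iff, Set.mem_singleton_iff, not_or]
      constructor
      · intro hxv
        exact hne (edge_at_v hmch e heM (hxv ▸ hx))
      · intro hxu
        exact hmch.2 e heM s(v, u) hin hne x hx
          (by rw [hxu]; exact Sym2.mem_mk_right v u)
  rw [mm, mIn, ← Finset.card_filter_add_card_filter_not
      (s := mchIn G Set.univ) (fun M => s(v, u) ∉ M), h1, h2]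
  rfl



lemma isAcyclic_of_le {G G' : SimpleGraph V} (h : G ≤ G') (hG' : G'.IsAcyclic) :
    G.IsAcyclic := fun _ c hc => hG' (c.mapLe h) (hc.mapLe h)

lemma isAcyclic_of_embedding {G : SimpleGraph V} {G' : SimpleGraph W} (f : G ↪g G')
    (hG' : G'.IsAcyclic) : G.IsAcyclic := fun _ c hc =>
  hG' (c.map f.toHom) ((Walk.map_isCycle_iff_of_injective f.injective).mpr hc)

lemma isAcyclic_induce {G : SimpleGraph V} (hG : G.IsAcyclic) (s : Set V) :
    (G.induce s).IsAcyclic := isAcyclic_of_embedding (Embedding.induce s) hG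

lemma fib_rearrange {a b : ℕ} :
    Nat.fib (a + 2) * Nat.fib (b + 2) ≤ 2 * Nat.fib (a + b + 1) := by
  have h := mul_add_mul_le_mul_add_mul (a := Nat.fib a) (b := Nat.fib (a + 1))
    (c := Nat.fib b) (d := Nat.fib (b + 1))
    (Nat.fib_mono (Nat.le_succ a)) (Nat.fib_mono (Nat.le_succ b))
  rw [Nat.fib_add_two, Nat.fib_add_two, Nat.fib_add a b]
  nlinarith [h]

lemma fib_rearrange_strict {a b : ℕ} (ha : a ≠ 1) (hb : b ≠ 1) :
    Nat.fib (a + 2) * Nat.fib (b + 2) < 2 * Nat.fib (a + b + 1) := by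
  have ha' : Nat.fib a < Nat.fib (a + 1) := by
    rcases Nat.lt_or_ge a 2 with h | h
    · interval_cases a
      · simp
      · omega
    · exact Nat.fib_lt_fib_succ h
  have hb' : Nat.fib b < Nat.fib (b + 1) := by
    rcases Nat.lt_or_ge b 2 with h | h
    · interval_cases b
      · simp
      · omega
    · exact Nat.fib_lt_fib_succ h
  rw [Nat.fib_add_two, Nat.fib_add_two, Nat.fib_add a b]
  nlinarith [ha', hb']

lemma fib_prod_le {a b : ℕ} (ha : 1 ≤ a) (hb : 1 ≤ b) :
    Nat.fib (a + 1) * Nat.fib (b + 1) ≤ 2 * Nat.fib (a + b - 1) := by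
  obtain ⟨a', rfl⟩ : ∃ a', a = a' + 1 := ⟨a - 1, by omega⟩
  obtain ⟨b', rfl⟩ : ∃ b', b = b' + 1 := ⟨b - 1, by omega⟩
  have : a' + 1 + (b' + 1) - 1 = a' + b' + 1 := by omega
  rw [this]
  exact fib_rearrange

lemma fib_prod_eq_iff {a b : ℕ} (ha : 1 ≤ a) (hb : 1 ≤ b) :
    Nat.fib (a + 1) * Nat.fib (b + 1) = 2 * Nat.fib (a + b - 1) ↔ (a = 2 ∨ b = 2) := by
  constructor
  · intro h
    by_contra hc
    push_neg at hc
    obtain ⟨a', rfl⟩ : ∃ a', a = a' + 1 := ⟨a - 1, by omega⟩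
    obtain ⟨b', rfl⟩ : ∃ b', b = b' + 1 := ⟨b - 1, by omega⟩
    have heq : a' + 1 + (b' + 1) - 1 = a' + b' + 1 := by omega
    rw [heq] at h
    exact absurd h (Nat.ne_of_lt (fib_rearrange_strict (by omega) (by omega)))
  · intro h
    rcases h with rfl | rfl
    · have : 2 + b - 1 = b + 1 := by omega
      rw [this]
      norm_num [show Nat.fib 3 = 2 from rfl]
    · have : a + 2 - 1 = a + 1 := by omega
      rw [this, Nat.mul_comm]
      norm_num [show Nat.fib 3 = 2 from rfl]

/-- Initial segment of a path graph is a path graph. -/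
def pathInitIso (t j : ℕ) (h : j ≤ t) :
    ((pathGraph t).induce {x : Fin t | (x : ℕ) < j}) ≃g pathGraph j where
  toEquiv :=
  { toFun := fun x => ⟨(x.1 : ℕ), x.2⟩
    invFun := fun i => ⟨⟨(i : ℕ), lt_of_lt_of_le i.2 h⟩, i.2⟩
    left_inv := fun x => by ext; rfl
    right_inv := fun i => by ext; rfl }
  map_rel_iff' := by
    intro a b
    simp only [Equiv.coe_fn_mk, comap_adj, Function.Embedding.coe_subtype]
    rw [pathGraph_adj, pathGraph_adj]

/-- Reversal of a path graph. -/
def pathRevIso (t : ℕ) : pathGraph t ≃g pathGraph t where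
  toEquiv := Fin.revPerm
  map_rel_iff' := by
    intro a b
    have ha := a.isLt
    have hb := b.isLt
    rw [pathGraph_adj, pathGraph_adj]
    simp only [Fin.revPerm_apply, Fin.val_rev]
    omega


lemma pathGraph_le_one_no_adj {t : ℕ} (ht : t ≤ 1) : ∀ a b : Fin t, ¬ (pathGraph t).Adj a b := by
  intro a b h
  rw [pathGraph_adj] at h
  have := a.isLt
  have := b.isLt
  omega

lemma mm_pathGraph (t : ℕ) : mm (pathGraph t) = Nat.fib (t + 1) := by
  induction t using Nat.strong_induction_on with
  | _ t ih =>
    rcases Nat.lt_or_ge t 2 with ht | ht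
    · rw [mm_eq_one_of_no_adj (pathGraph_le_one_no_adj (by omega))]
      interval_cases t <;> rfl
    · set v : Fin t := ⟨t - 1, by omega⟩ with hv
      set u : Fin t := ⟨t - 2, by omega⟩ with hu
      have hnb : (pathGraph t).neighborFinset v = {u} := by
        ext w
        rw [mem_neighborFinset, pathGraph_adj, Finset.mem_singleton]
        have := w.isLt
        rw [Fin.ext_iff]
        simp only [hv, hu]
        omega
      rw [mm_leaf_rec hnb]
      have h1 : ({v}ᶜ : Set (Fin t)) = {x : Fin t | (x : ℕ) < t - 1} := by
        ext x
        simp only [Set.mem_compl_iff, Set.mem_singleton_iff, Set.mem_setOf_eq, Fin.ext_iff, hv]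
        have := x.isLt
        omega
      have h2 : (({v, u} : Set (Fin t))ᶜ) = {x : Fin t | (x : ℕ) < t - 2} := by
        ext x
        simp only [Set.mem_compl_iff, Set.mem_insert_iff, Set.mem_singleton_iff,
          Set.mem_setOf_eq, Fin.ext_iff, not_or, hv, hu]
        have := x.isLt
        omega
      rw [h1, h2]
      have ha : mIn (pathGraph t) {x : Fin t | (x : ℕ) < t - 1} = Nat.fib (t - 1 + 1) := by
        rw [← mIn_induce, ← ih (t - 1) (by omega)]
        exact (mm_irrel _ _ _).trans (mm_iso (pathInitIso t (t - 1) (by omega)))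
      have hb : mIn (pathGraph t) {x : Fin t | (x : ℕ) < t - 2} = Nat.fib (t - 2 + 1) := by
        rw [← mIn_induce, ← ih (t - 2) (by omega)]
        exact (mm_irrel _ _ _).trans (mm_iso (pathInitIso t (t - 2) (by omega)))
      rw [ha, hb, show t - 1 + 1 = t by omega, show t - 2 + 1 = t - 1 by omega]
      have hfib := Nat.fib_add_two (n := t - 1)
      rw [show t - 1 + 2 = t + 1 by omega, show t - 1 + 1 = t by omega] at hfib
      omega

lemma mm_sum {α β : Type*} [Fintype α] [Fintype β] (G : SimpleGraph α) (G' : SimpleGraph β) :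
    mm (G ⊕g G') = mm G * mm G' := by
  have hA : ∀ a b, (G ⊕g G').Adj a b →
      (a ∈ Set.range (Sum.inl : α → α ⊕ β) ↔ b ∈ Set.range Sum.inl) := by
    rintro (a | a) (b | b) hadj <;> simp_all
  rw [mm_split hA]
  congr 1
  · have := mIn_image (f := (Sum.inl : α → α ⊕ β)) Sum.inl_injective
      (G := G) (G' := G ⊕g G') (fun a b => Iff.rfl) Set.univ
    rw [Set.image_univ] at this
    rw [this]
    rfl
  · have hcompl : (Set.range (Sum.inl : α → α ⊕ β))ᶜ = Set.range Sum.inr := by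
      ext (x | x) <;> simp
    have := mIn_image (f := (Sum.inr : β → α ⊕ β)) Sum.inr_injective
      (G := G') (G' := G ⊕g G') (fun a b => Iff.rfl) Set.univ
    rw [Set.image_univ] at this
    rw [hcompl, this]
    rfl

/-- A graph whose vertex set splits into two adjacency-closed parts is the disjoint
sum of the induced subgraphs. -/
def isoSumCompl (G : SimpleGraph V) (A : Set V)
    (hA : ∀ a b, G.Adj a b → (a ∈ A ↔ b ∈ A)) :
    G ≃g ((G.induce A) ⊕g (G.induce Aᶜ)) where
  toEquiv := (Equiv.Set.sumCompl A).symm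
  map_rel_iff' := by
    intro a b
    by_cases ha : a ∈ A <;> by_cases hb : b ∈ A
    · rw [Equiv.Set.sumCompl_symm_apply_of_mem ha, Equiv.Set.sumCompl_symm_apply_of_mem hb]
      rfl
    · rw [Equiv.Set.sumCompl_symm_apply_of_mem ha,
        Equiv.Set.sumCompl_symm_apply_of_notMem hb]
      simp only [sum_adj]
      constructor
      · intro hcontra
        exact hcontra.elim
      · intro hadj
        exact absurd ((hA a b hadj).mp ha) hb
    · rw [Equiv.Set.sumCompl_symm_apply_of_notMem ha,
        Equiv.Set.sumCompl_symm_apply_of_mem hb]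
      simp only [sum_adj]
      constructor
      · intro hcontra
        exact hcontra.elim
      · intro hadj
        exact absurd ((hA a b hadj).mpr hb) ha
    · rw [Equiv.Set.sumCompl_symm_apply_of_notMem ha,
        Equiv.Set.sumCompl_symm_apply_of_notMem hb]
      rfl
/-- Intermediate value property for walks in a path graph. -/
lemma pathGraph_walk_mem_support {t : ℕ} {k : Fin t} :
    ∀ {a b : Fin t} (w : (pathGraph t).Walk a b),
      (a : ℕ) ≤ k → (k : ℕ) ≤ b → k ∈ w.support
  | a, _, Walk.nil, ha, hb => by
    have : a = k := Fin.ext (le_antisymm ha hb)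
    rw [← this]
    exact Walk.start_mem_support _
  | a, b, @Walk.cons _ _ _ c _ h p, ha, hb => by
    by_cases hk : k = a
    · rw [hk]
      exact Walk.start_mem_support _
    · have hxk : (a : ℕ) < k := lt_of_le_of_ne ha (fun hh => hk (Fin.ext hh.symm))
      have hck : (c : ℕ) ≤ k := by
        rw [pathGraph_adj] at h
        omega
      rw [Walk.support_cons]
      exact List.mem_cons_of_mem _ (pathGraph_walk_mem_support p hck hb)

/-- Attaching a pendant vertex to the far endpoint of a path graph gives a path graph. -/
lemma iso_of_pendant [Fintype V] {G : SimpleGraph V} {v u : V} {n : ℕ}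
    (hcard : Fintype.card V = n) (hleaf : G.neighborFinset v = {u}) (hne : u ≠ v)
    (hn : 2 ≤ n)
    (f : (G.induce ({v}ᶜ : Set V)) ≃g pathGraph (n - 1))
    (hfu : ((f ⟨u, hne⟩ : Fin (n - 1)) : ℕ) = n - 2) :
    Nonempty (G ≃g pathGraph n) := by
  have hvu : G.Adj v u := by
    rw [← mem_neighborFinset, hleaf]
    exact Finset.mem_singleton_self u
  have hadj_iff : ∀ b : V, G.Adj v b ↔ b = u := by
    intro b
    rw [← mem_neighborFinset, hleaf, Finset.mem_singleton]
  set φ : V → Fin n := fun x =>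
    if h : x = v then ⟨n - 1, by omega⟩
    else ⟨((f ⟨x, h⟩ : Fin (n - 1)) : ℕ), by
      have := (f ⟨x, h⟩).isLt
      omega⟩ with hφ
  have hφv : φ v = ⟨n - 1, by omega⟩ := by simp [hφ]
  have hφx : ∀ (x : V) (h : x ≠ v), (φ x : ℕ) = ((f ⟨x, h⟩ : Fin (n - 1)) : ℕ) := by
    intro x h
    simp [hφ, h]
  have hinj : Function.Injective φ := by
    intro x y hxy
    by_cases hx : x = v <;> by_cases hy : y = v
    · rw [hx, hy]
    · exfalso
      have h1 : (φ x : ℕ) = n - 1 := by rw [hx, hφv]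
      have h2 := hφx y hy
      have := (f ⟨y, hy⟩).isLt
      rw [hxy] at h1
      omega
    · exfalso
      have h1 : (φ y : ℕ) = n - 1 := by rw [hy, hφv]
      have h2 := hφx x hx
      have := (f ⟨x, hx⟩).isLt
      rw [← hxy] at h1
      omega
    · have : f ⟨x, hx⟩ = f ⟨y, hy⟩ := by
        apply Fin.ext
        rw [← hφx x hx, ← hφx y hy, hxy]
      have := f.toEquiv.injective this
      exact congrArg Subtype.val this
  have hbij : Function.Bijective φ := by
    rw [Fintype.bijective_iff_injective_and_card]
    exact ⟨hinj, by rw [hcard, Fintype.card_fin]⟩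
  refine ⟨⟨Equiv.ofBijective φ hbij, ?_⟩⟩
  intro a b
  show (pathGraph n).Adj (φ a) (φ b) ↔ G.Adj a b
  have key : ∀ x : V, ∀ hx : x ≠ v,
      ((pathGraph n).Adj (φ v) (φ x) ↔ G.Adj v x) := by
    intro x hx
    rw [pathGraph_adj, hadj_iff]
    have h1 : (φ v : ℕ) = n - 1 := by rw [hφv]
    have h2 := hφx x hx
    have h3 := (f ⟨x, hx⟩).isLt
    constructor
    · intro hc
      have hval : (φ x : ℕ) = n - 2 := by omega
      have : f ⟨x, hx⟩ = f ⟨u, hne⟩ := Fin.ext (by rw [hfu]; omega)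
      have := f.toEquiv.injective this
      exact congrArg Subtype.val this
    · intro hc
      have hsub : (⟨x, hx⟩ : ({v}ᶜ : Set V)) = ⟨u, hne⟩ := Subtype.ext hc
      have h4 : ((f ⟨x, hx⟩ : Fin (n - 1)) : ℕ) = n - 2 := by rw [hsub, hfu]
      omega
  by_cases ha : a = v <;> by_cases hb : b = v
  · subst ha; subst hb
    exact iff_of_false ((pathGraph n).irrefl) (G.irrefl)
  · subst ha
    exact key b hb
  · subst hb
    rw [(pathGraph n).adj_comm, G.adj_comm]
    exact key a ha
  · have h2a := hφx a ha
    have h2b := hφx b hb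
    have h3a := (f ⟨a, ha⟩).isLt
    have h3b := (f ⟨b, hb⟩).isLt
    rw [pathGraph_adj]
    have : ((f ⟨a, ha⟩ : Fin (n - 1)) : ℕ) + 1 = ((f ⟨b, hb⟩ : Fin (n - 1)) : ℕ) ∨
        ((f ⟨b, hb⟩ : Fin (n - 1)) : ℕ) + 1 = ((f ⟨a, ha⟩ : Fin (n - 1)) : ℕ) ↔
        (pathGraph (n - 1)).Adj (f ⟨a, ha⟩) (f ⟨b, hb⟩) := (pathGraph_adj).symm
    rw [show ((φ a : ℕ) + 1 = (φ b : ℕ) ∨ (φ b : ℕ) + 1 = (φ a : ℕ)) ↔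
        (((f ⟨a, ha⟩ : Fin (n - 1)) : ℕ) + 1 = ((f ⟨b, hb⟩ : Fin (n - 1)) : ℕ) ∨
        ((f ⟨b, hb⟩ : Fin (n - 1)) : ℕ) + 1 = ((f ⟨a, ha⟩ : Fin (n - 1)) : ℕ)) by
      rw [h2a, h2b], this, f.map_rel_iff]
    exact Iff.rfl


universe u

theorem main_bound (n : ℕ) : ∀ (V : Type u) [Fintype V] (G : SimpleGraph V),
    Fintype.card V = n → G.IsAcyclic →
    mm G ≤ Nat.fib (n + 1) ∧
      (mm G = Nat.fib (n + 1) → Nonempty (G ≃g pathGraph n)) := by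
  induction n using Nat.strong_induction_on with
  | _ n ih =>
    intro V _ G hcard hac
    by_cases hE : ∀ a b : V, ¬ G.Adj a b
    · have hm := mm_eq_one_of_no_adj hE
      constructor
      · rw [hm]
        exact Nat.fib_pos.mpr (by omega)
      · intro heq
        have hn1 : n ≤ 1 := by
          by_contra hn
          have h2 : 2 ≤ Nat.fib (n + 1) := by
            calc 2 = Nat.fib 3 := rfl
            _ ≤ Nat.fib (n + 1) := Nat.fib_mono (by omega)
          omega
        refine ⟨⟨Fintype.equivFinOfCardEq hcard, ?_⟩⟩
        intro a b
        exact iff_of_false (pathGraph_le_one_no_adj hn1 _ _) (hE a b)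
    · push_neg at hE
      obtain ⟨x, y, hxy⟩ := hE
      obtain ⟨v, u, hleaf⟩ := exists_leaf hac hxy
      have hvu : G.Adj v u := by
        rw [← mem_neighborFinset, hleaf]
        exact Finset.mem_singleton_self u
      have hne : u ≠ v := hvu.ne'
      have hn2 : 2 ≤ n := by
        rw [← hcard]
        have : Nontrivial V := ⟨⟨u, v, hne⟩⟩
        exact Fintype.one_lt_card
      have c1 : Fintype.card ↥({v}ᶜ : Set V) = n - 1 := by
        rw [Fintype.card_compl_set]
        simp [hcard]
      have c2 : Fintype.card ↥(({v, u} : Set V)ᶜ) = n - 2 := by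
        rw [Fintype.card_compl_set]
        have : Fintype.card ↥({v, u} : Set V) = 2 := by
          rw [← Set.toFinset_card]
          rw [Set.toFinset_insert, Set.toFinset_singleton]
          rw [Finset.card_insert_of_notMem (by simp [hne.symm])]
          simp
        rw [this, hcard]
      have ih1 := ih (n - 1) (by omega) ↥({v}ᶜ : Set V)
        (G.induce ({v}ᶜ : Set V)) c1 (isAcyclic_induce hac _)
      have ih2 := ih (n - 2) (by omega) ↥(({v, u} : Set V)ᶜ)
        (G.induce (({v, u} : Set V)ᶜ)) c2 (isAcyclic_induce hac _)
      have hrec := mm_leaf_rec hleaf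
      have t1 : mIn G ({v}ᶜ) = mm (G.induce ({v}ᶜ : Set V)) := (mIn_induce G _).symm
      have t2 : mIn G (({v, u} : Set V)ᶜ) = mm (G.induce (({v, u} : Set V)ᶜ)) :=
        (mIn_induce G _).symm
      have hfib : Nat.fib (n - 1 + 1) + Nat.fib (n - 2 + 1) = Nat.fib (n + 1) := by
        have hfa := Nat.fib_add_two (n := n - 1)
        rw [show n - 1 + 2 = n + 1 by omega] at hfa
        rw [show n - 1 + 1 = n by omega] at hfa ⊢
        rw [show n - 2 + 1 = n - 1 by omega]
        omega
      have b1 : mIn G ({v}ᶜ) ≤ Nat.fib (n - 1 + 1) := by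
        rw [t1]
        exact ih1.1
      have b2 : mIn G (({v, u} : Set V)ᶜ) ≤ Nat.fib (n - 2 + 1) := by
        rw [t2]
        exact ih2.1
      constructor
      · omega
      · intro heq
        have e1' : mIn G ({v}ᶜ) = Nat.fib (n - 1 + 1) := by omega
        have e2' : mIn G (({v, u} : Set V)ᶜ) = Nat.fib (n - 2 + 1) := by omega
        obtain ⟨e₁⟩ := ih1.2 (by rw [← t1]; exact e1')
        set u' : ↥({v}ᶜ : Set V) := ⟨u, hne⟩ with hu'
        set k : ℕ := ((e₁ u' : Fin (n - 1)) : ℕ) with hkdef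
        have hklt : k < n - 1 := (e₁ u').isLt
        have hk : k = 0 ∨ k = n - 2 := by
          by_contra hkc
          push_neg at hkc
          have hk1 : 1 ≤ k ∧ k ≤ n - 3 := by omega
          have hn4 : 4 ≤ n := by omega
          obtain ⟨e₂⟩ := ih2.2 (by rw [← t2]; exact e2')
          have hconn : (G.induce (({v, u} : Set V)ᶜ)).Connected := by
            have hpc : (pathGraph (n - 2)).Connected := by
              rw [show n - 2 = (n - 3) + 1 by omega]
              exact pathGraph_connected (n - 3)
            exact Connected.map e₂.symm.toHom e₂.symm.toEquiv.surjective hpc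
          let emb : (G.induce (({v, u} : Set V)ᶜ)) →g (G.induce ({v}ᶜ : Set V)) :=
            ⟨fun z => ⟨z.1, fun hz => z.2 (Or.inl hz)⟩, fun {a b} hab => hab⟩
          have hmemX : ∀ (j : Fin (n - 1)), (j : ℕ) ≠ k →
              ((e₁.symm j : ↥({v}ᶜ : Set V)) : V) ∈ (({v, u} : Set V)ᶜ) := by
            intro j hj hmem
            rcases hmem with hmem | hmem
            · exact (e₁.symm j).2 hmem
            · have : (e₁.symm j) = u' := Subtype.ext hmem
              have : j = e₁ u' := by
                rw [← this]
                exact (e₁.apply_symm_apply j).symm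
              rw [this] at hj
              exact hj rfl
          set X : ↥(({v, u} : Set V)ᶜ) :=
            ⟨(e₁.symm ⟨k - 1, by omega⟩ : ↥({v}ᶜ : Set V)),
              hmemX _ (by show k - 1 ≠ k; omega)⟩ with hX
          set Y : ↥(({v, u} : Set V)ᶜ) :=
            ⟨(e₁.symm ⟨k + 1, by omega⟩ : ↥({v}ᶜ : Set V)),
              hmemX _ (by show k + 1 ≠ k; omega)⟩ with hY
          obtain ⟨w⟩ := hconn.preconnected X Y
          let W := (w.map emb).map e₁.toHom
          have hembX : emb X = e₁.symm ⟨k - 1, by omega⟩ := Subtype.ext rfl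
          have hembY : emb Y = e₁.symm ⟨k + 1, by omega⟩ := Subtype.ext rfl
          have hWs : ((e₁ (emb X) : Fin (n - 1)) : ℕ) = k - 1 := by
            rw [hembX, e₁.apply_symm_apply]
          have hWt : ((e₁ (emb Y) : Fin (n - 1)) : ℕ) = k + 1 := by
            rw [hembY, e₁.apply_symm_apply]
          have hkmem : (⟨k, by omega⟩ : Fin (n - 1)) ∈ W.support :=
            pathGraph_walk_mem_support (k := ⟨k, by omega⟩) W
              (by show ((e₁ (emb X) : Fin (n - 1)) : ℕ) ≤ k; rw [hWs]; omega)
              (by show k ≤ ((e₁ (emb Y) : Fin (n - 1)) : ℕ); rw [hWt]; omega)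
          rw [Walk.support_map, List.mem_map] at hkmem
          obtain ⟨z, hz, hze⟩ := hkmem
          have hzu : z = u' := by
            apply e₁.toEquiv.injective
            show e₁.toHom z = e₁.toHom u'
            rw [hze]
            apply Fin.ext
            show (k : ℕ) = ((e₁ u' : Fin (n - 1)) : ℕ)
            exact hkdef
          rw [Walk.support_map, List.mem_map] at hz
          obtain ⟨z₂, hz₂, hz₂e⟩ := hz
          have : (z₂ : V) = u := by
            have := congrArg Subtype.val (hz₂e.trans hzu)
            exact this
          exact z₂.2 (Or.inr this)
        rcases hk with hk0 | hkn
        · refine iso_of_pendant hcard hleaf hne hn2 ((pathRevIso (n - 1)).comp e₁) ?_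
          show ((Fin.rev (e₁ u') : Fin (n - 1)) : ℕ) = n - 2
          rw [Fin.val_rev]
          omega
        · exact iso_of_pendant hcard hleaf hne hn2 e₁ hkn

def sumCongrIso {α β γ δ : Type*} {G₁ : SimpleGraph α} {G₂ : SimpleGraph β}
    {H₁ : SimpleGraph γ} {H₂ : SimpleGraph δ}
    (f : G₁ ≃g H₁) (g : G₂ ≃g H₂) : (G₁ ⊕g G₂) ≃g (H₁ ⊕g H₂) where
  toEquiv := Equiv.sumCongr f.toEquiv g.toEquiv
  map_rel_iff' := by
    intro a b
    cases a <;> cases b <;> simp [f.map_rel_iff, g.map_rel_iff]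

lemma degree_le_one_of_isMch [Fintype V] {H : SimpleGraph V} {M : Finset (Sym2 V)}
    (hM : IsMch H M) : ∀ v, (fromEdgeSet (↑M : Set (Sym2 V))).degree v ≤ 1 := by
  intro v
  by_contra hdeg
  rw [not_le] at hdeg
  obtain ⟨a, ha, b, hb, hab⟩ := Finset.one_lt_card.mp hdeg
  rw [mem_neighborFinset, fromEdgeSet_adj] at ha hb
  exact hM.2 _ ha.1 _ hb.1 (fun hh => hab (Sym2.congr_right.mp hh)) v
    (Sym2.mem_mk_left _ _) (Sym2.mem_mk_left _ _)

lemma fromEdgeSet_isAcyclic {H : SimpleGraph V} (hH : H.IsAcyclic)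
    {M : Finset (Sym2 V)} (hsub : (↑M : Set (Sym2 V)) ⊆ H.edgeSet) :
    (fromEdgeSet (↑M : Set (Sym2 V))).IsAcyclic :=
  isAcyclic_of_le (le_trans (fromEdgeSet_mono hsub) (fromEdgeSet_edgeSet H).le) hH

lemma sachs_deg_le_one [Fintype V] {H : SimpleGraph V} (hH : H.IsAcyclic)
    {M : Finset (Sym2 V)} (hS : IsSachs H M) :
    ∀ v, (fromEdgeSet (↑M : Set (Sym2 V))).degree v ≤ 1 := by
  have hac : (fromEdgeSet (↑M : Set (Sym2 V))).IsAcyclic := fromEdgeSet_isAcyclic hH hS.1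
  intro v
  by_contra hdeg
  rw [not_le] at hdeg
  have hv2 : (fromEdgeSet (↑M : Set (Sym2 V))).degree v = 2 := by
    have hvs : v ∈ (fromEdgeSet (↑M : Set (Sym2 V))).support := by
      rw [mem_support]
      obtain ⟨a, ha, -⟩ := Finset.one_lt_card.mp hdeg
      exact ⟨a, (mem_neighborFinset _ _ _).mp ha⟩
    rcases hS.2.1 v hvs with h1 | h2
    · omega
    · exact h2
  have spread : ∀ {a b : V}, (fromEdgeSet (↑M : Set (Sym2 V))).Walk a b →
      (fromEdgeSet (↑M : Set (Sym2 V))).degree a = 2 →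
      (fromEdgeSet (↑M : Set (Sym2 V))).degree b = 2 := by
    intro a b w
    induction w with
    | nil => exact id
    | @cons p c q h w ihw =>
      intro hp
      apply ihw
      have hcs : c ∈ (fromEdgeSet (↑M : Set (Sym2 V))).support :=
        (mem_support _).mpr ⟨p, h.symm⟩
      rcases hS.2.1 c hcs with h1 | h2
      · have := hS.2.2 c p h.symm h1
        omega
      · exact h2
  obtain ⟨w, hr, hd⟩ := exists_degree_le_one hac v
  obtain ⟨p⟩ := hr
  have := spread p hv2
  have h3 : (fromEdgeSet (↑M : Set (Sym2 V))).degree w ≤ 1 := by convert hd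
  omega

lemma isSachs_iff_isMch [Fintype V] {H : SimpleGraph V} (hH : H.IsAcyclic)
    (M : Finset (Sym2 V)) : IsSachs H M ↔ IsMch H M := by
  constructor
  · intro hS
    refine ⟨hS.1, ?_⟩
    intro e he f hf hef x hxe hxf
    have hdeg := sachs_deg_le_one hH hS x
    obtain ⟨a, haH, rfl⟩ := exists_eq_of_mem_edge (hS.1 he) hxe
    obtain ⟨b, hbH, rfl⟩ := exists_eq_of_mem_edge (hS.1 hf) hxf
    have hA : a ∈ (fromEdgeSet (↑M : Set (Sym2 V))).neighborFinset x := by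
      rw [mem_neighborFinset, fromEdgeSet_adj]
      exact ⟨he, haH.ne⟩
    have hB : b ∈ (fromEdgeSet (↑M : Set (Sym2 V))).neighborFinset x := by
      rw [mem_neighborFinset, fromEdgeSet_adj]
      exact ⟨hf, hbH.ne⟩
    have hab : a ≠ b := fun hh => hef (by rw [hh])
    have : 1 < (fromEdgeSet (↑M : Set (Sym2 V))).degree x :=
      Finset.one_lt_card.mpr ⟨a, hA, b, hB, hab⟩
    omega
  · intro hm
    have hdeg := degree_le_one_of_isMch hm
    refine ⟨hm.1, ?_, ?_⟩
    · intro v hv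
      left
      obtain ⟨w, hw⟩ := (mem_support _).mp hv
      have h1 : 0 < (fromEdgeSet (↑M : Set (Sym2 V))).degree v :=
        Finset.card_pos.mpr ⟨w, (mem_neighborFinset _ _ _).mpr hw⟩
      have := hdeg v
      omega
    · intro a b hadj _
      have hbs : b ∈ (fromEdgeSet (↑M : Set (Sym2 V))).support :=
        (mem_support _).mpr ⟨a, hadj.symm⟩
      obtain ⟨w, hw⟩ := (mem_support _).mp hbs
      have h1 : 0 < (fromEdgeSet (↑M : Set (Sym2 V))).degree b :=
        Finset.card_pos.mpr ⟨w, (mem_neighborFinset _ _ _).mpr hw⟩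
      have := hdeg b
      omega

lemma numCycles_eq_zero [Fintype V] {M : Finset (Sym2 V)}
    (hdeg : ∀ v, (fromEdgeSet (↑M : Set (Sym2 V))).degree v ≤ 1) : numCycles M = 0 := by
  have hempty : IsEmpty {c : (fromEdgeSet (↑M : Set (Sym2 V))).ConnectedComponent //
      ∀ v, (fromEdgeSet (↑M : Set (Sym2 V))).connectedComponentMk v = c →
        (fromEdgeSet (↑M : Set (Sym2 V))).degree v = 2} := by
    constructor
    rintro ⟨c, hc⟩
    obtain ⟨v, rfl⟩ := c.exists_rep
    have h1 := hc v rfl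
    have h2 := hdeg v
    omega
  rw [numCycles]
  exact @Nat.card_of_isEmpty _ hempty

lemma PS_eq_mm [Fintype V] {H : SimpleGraph V} (hH : H.IsAcyclic) : PS H = mm H := by
  rw [PS]
  have h1 : ∀ M ∈ Finset.univ.filter (fun M : Finset (Sym2 V) => IsSachs H M),
      2 ^ numCycles M = 1 := by
    intro M hM
    rw [Finset.mem_filter] at hM
    have hmch : IsMch H M := (isSachs_iff_isMch hH M).mp hM.2
    rw [numCycles_eq_zero (degree_le_one_of_isMch hmch), pow_zero]
  rw [Finset.sum_congr rfl h1, Finset.sum_const, smul_eq_mul, mul_one]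
  rw [mm, mIn, mchIn]
  apply congrArg Finset.card
  ext M
  simp only [Finset.mem_filter, Finset.mem_univ, true_and]
  rw [isSachs_iff_isMch hH M]
  simp only [Set.mem_univ, implies_true, and_true]


/-- A forest of order `n ≥ 4` with at least two components has permanental sum at most
`2·F(n-1)`, with equality iff it is `P₂ ⊔ P_{n-2}`. -/
theorem PS_forest_disconnected [Fintype V] (H : SimpleGraph V) (hH : H.IsAcyclic)
    (hn : 4 ≤ Fintype.card V) (hcomp : 2 ≤ Nat.card H.ConnectedComponent) :
    PS H ≤ 2 * Nat.fib (Fintype.card V - 1) ∧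
    (PS H = 2 * Nat.fib (Fintype.card V - 1) ↔
      Nonempty (H ≃g (pathGraph 2 ⊕g pathGraph (Fintype.card V - 2)))) := by
  classical
  set n := Fintype.card V with hndef
  have hps : PS H = mm H := PS_eq_mm hH
  have hnone : Nonempty V := Fintype.card_pos_iff.mp (by omega)
  obtain ⟨v₀⟩ := hnone
  set c := H.connectedComponentMk v₀ with hc
  set A : Set V := {x | H.connectedComponentMk x = c} with hA
  have hclosed : ∀ a b, H.Adj a b → (a ∈ A ↔ b ∈ A) := by
    intro a b hab
    have hmk : H.connectedComponentMk a = H.connectedComponentMk b :=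
      ConnectedComponent.eq.mpr hab.reachable
    simp only [hA, Set.mem_setOf_eq]
    rw [hmk]
  have hsplit := mm_split (G := H) hclosed
  set a := Fintype.card ↥A with hadef
  set b := Fintype.card ↥(Aᶜ) with hbdef
  have hab : a + b = n := by
    have h1 := Fintype.card_compl_set A
    have hle : a ≤ n := Fintype.card_le_of_injective _ Subtype.val_injective
    omega
  have ha1 : 1 ≤ a :=
    Fintype.card_pos_iff.mpr ⟨⟨v₀, show H.connectedComponentMk v₀ = c from hc.symm⟩⟩
  have hb1 : 1 ≤ b := by
    have hnt : Nontrivial H.ConnectedComponent := by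
      rw [← Finite.one_lt_card_iff_nontrivial]
      omega
    obtain ⟨c', hc'⟩ := exists_ne c
    obtain ⟨w, hw⟩ := c'.exists_rep
    refine Fintype.card_pos_iff.mpr ⟨⟨w, ?_⟩⟩
    have hw' : H.connectedComponentMk w = c' := hw
    simp only [hA, Set.mem_compl_iff, Set.mem_setOf_eq]
    rw [hw']
    exact hc'
  have hiA := main_bound a ↥A (H.induce A) rfl (isAcyclic_induce hH A)
  have hiB := main_bound b ↥(Aᶜ) (H.induce Aᶜ) rfl (isAcyclic_induce hH Aᶜ)
  have tA : mIn H A = mm (H.induce A) := (mIn_induce H A).symm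
  have tB : mIn H (Aᶜ) = mm (H.induce (Aᶜ)) := (mIn_induce H (Aᶜ)).symm
  have hbA : mIn H A ≤ Nat.fib (a + 1) := by rw [tA]; exact hiA.1
  have hbB : mIn H (Aᶜ) ≤ Nat.fib (b + 1) := by rw [tB]; exact hiB.1
  have hprod : Nat.fib (a + 1) * Nat.fib (b + 1) ≤ 2 * Nat.fib (n - 1) := by
    have hp := fib_prod_le ha1 hb1
    rw [show a + b - 1 = n - 1 by omega] at hp
    exact hp
  have hchain1 : mIn H A * mIn H (Aᶜ) ≤ Nat.fib (a + 1) * mIn H (Aᶜ) :=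
    Nat.mul_le_mul_right _ hbA
  have hchain2 : Nat.fib (a + 1) * mIn H (Aᶜ) ≤ Nat.fib (a + 1) * Nat.fib (b + 1) :=
    Nat.mul_le_mul_left _ hbB
  constructor
  · rw [hps, hsplit]
    omega
  · constructor
    · intro heq
      rw [hps, hsplit] at heq
      have hfibApos : 1 ≤ Nat.fib (a + 1) := Nat.fib_pos.mpr (by omega)
      have hfibBpos : 1 ≤ Nat.fib (b + 1) := Nat.fib_pos.mpr (by omega)
      have hQpos : 1 ≤ mIn H (Aᶜ) := mIn_pos H _
      have hEq1 : mIn H A * mIn H (Aᶜ) = Nat.fib (a + 1) * Nat.fib (b + 1) := by omega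
      have hEqF : Nat.fib (a + 1) * Nat.fib (b + 1) = 2 * Nat.fib (n - 1) := by omega
      have hPA : mIn H A = Nat.fib (a + 1) := by
        by_contra hcon
        have hlt : mIn H A < Nat.fib (a + 1) := lt_of_le_of_ne hbA hcon
        have : mIn H A * mIn H (Aᶜ) < Nat.fib (a + 1) * mIn H (Aᶜ) :=
          Nat.mul_lt_mul_of_lt_of_le hlt (le_refl _) hQpos
        omega
      have hPB : mIn H (Aᶜ) = Nat.fib (b + 1) := by
        rw [hPA] at hEq1
        exact Nat.eq_of_mul_eq_mul_left (by omega) hEq1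
      have hor := (fib_prod_eq_iff ha1 hb1).mp
        (by rw [show a + b - 1 = n - 1 by omega]; exact hEqF)
      obtain ⟨eA⟩ := hiA.2 (by rw [← tA]; exact hPA)
      obtain ⟨eB⟩ := hiB.2 (by rw [← tB]; exact hPB)
      have isoSum := isoSumCompl H A hclosed
      rcases hor with h2a | h2b
      · have hb' : b = n - 2 := by omega
        exact ⟨Iso.comp (sumCongrIso (h2a ▸ eA) (hb' ▸ eB)) isoSum⟩
      · have ha' : a = n - 2 := by omega
        exact ⟨Iso.comp Iso.sumComm
          (Iso.comp (sumCongrIso (ha' ▸ eA) (h2b ▸ eB)) isoSum)⟩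
    · rintro ⟨iso⟩
      rw [hps, mm_iso iso, mm_sum, mm_pathGraph, mm_pathGraph,
        show n - 2 + 1 = n - 1 by omega]
      norm_num [show Nat.fib 3 = 2 from rfl]

end PermSum
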